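/- arXiv:1801.09139 — 6 statements merged into one kernel-verified Lean document; each statement's English description precedes it below -/
import Mathlib

section
/- Serre's bound is attained: for any d with 1 ≤ d ≤ q, the homogeneous polynomial F(x_0,...,x_m) = (x_1 - a_1 x_0)···(x_1 - a_d x_0), where a_1,...,a_d are distinct elements of F_q, has exactly d*q^{m-1} + p_{m-2} zeros in P^m(F_q). -/
/-!
A point of `ℙ^m` is a zero of `F` iff one (equivalently every) representative `v` satisfies
`v 1 = a i * v 0` for some `i`, a condition invariant under scaling. So `(q - 1) * N` is the number
of nonzero vectors in this cone. The cone is `K^(m-1)` times the union of the `d` lines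
`y = a i * x` in `K²`, which meet only at the origin and so have `(q - 1) * d + 1` points together.
Removing the zero vector and dividing by `q - 1` gives `N = d * q^(m-1) + (q^(m-1) - 1) / (q - 1)`.
-/

open MvPolynomial Finset

/-- Reduce an exponent modulo `q-1`: unchanged if `≤ q-1`, otherwise the
representative in `{1,...,q-1}` congruent to it modulo `q-1`. -/
def redExp (q a : ℕ) : ℕ := if a ≤ q - 1 then a else (a - 1) % (q - 1) + 1

/-- Projective reduction of a monomial (given by its exponent vector): all exponents
below the top variable of the support are reduced modulo `q-1`, and the difference is
transferred to the exponent of the top variable. -/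
noncomputable def projRed (q : ℕ) {m : ℕ} (μ : Fin (m + 1) →₀ ℕ) : Fin (m + 1) →₀ ℕ :=
  if h : μ.support.Nonempty then
    letI ℓ := μ.support.max' h
    Finsupp.equivFunOnFinite.symm fun i =>
      if i < ℓ then redExp q (μ i)
      else if i = ℓ then μ ℓ + ∑ j ∈ Finset.univ.filter (· < ℓ), (μ j - redExp q (μ j))
      else 0
  else 0

/-- Projective reduction of a polynomial: the linear extension of projective
reduction of monomials. -/
noncomputable def polyRed (q : ℕ) {m : ℕ} {k : Type} [CommRing k]
    (f : MvPolynomial (Fin (m + 1)) k) : MvPolynomial (Fin (m + 1)) k :=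
  f.support.sum fun μ => monomial (projRed q μ) (coeff μ f)

/-- The ideal generated by the Fermat polynomials `X i ^ q * X j - X i * X j ^ q`. -/
noncomputable def fermatIdeal (q m : ℕ) (k : Type) [CommRing k] : Ideal (MvPolynomial (Fin (m + 1)) k) :=
  Ideal.span {f | ∃ i j : Fin (m + 1), i < j ∧ f = X i ^ q * X j - X i * X j ^ q}

/-- The leading exponent (exponent vector of the leading monomial) of a multivariate
polynomial with respect to a monomial order. -/
noncomputable def lmExp {σ : Type} (mo : MonomialOrder σ) {R : Type} [CommSemiring R]
    (f : MvPolynomial σ R) : σ →₀ ℕ :=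
  mo.toSyn.symm (f.support.sup fun μ => mo.toSyn μ)

namespace Projectivization

open scoped LinearAlgebra.Projectivization

theorem card_nonzero_subtype_eq_mul (K V : Type*) [DivisionRing K] [AddCommGroup V] [Module K V]
    (p : V → Prop) (hp : ∀ (c : Kˣ) (v : V), p (c • v) ↔ p v) :
    Nat.card {v : V // v ≠ 0 ∧ p v} = Nat.card {P : ℙ K V // p P.rep} * Nat.card Kˣ := by
  have hrep (v : {v : V // v ≠ 0}) : p v ↔ p (mk' K v).rep := by
    obtain ⟨c, hc⟩ := exists_smul_eq_mk_rep K v.1 v.2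
    rw [mk'_eq_mk, ← hc, hp]
  calc Nat.card {v : V // v ≠ 0 ∧ p v}
      = Nat.card {v : {v : V // v ≠ 0} // p v} :=
        Nat.card_congr (Equiv.subtypeSubtypeEquivSubtypeInter _ _).symm
    _ = Nat.card {x : ℙ K V × Kˣ // p x.1.rep} :=
        Nat.card_congr (Equiv.subtypeEquiv (nonZeroEquivProjectivizationProdUnits K V) hrep)
    _ = Nat.card {P : ℙ K V // p P.rep} * Nat.card Kˣ := by
        rw [Nat.card_congr (Equiv.prodSubtypeFstEquivSubtypeProd (p := fun P : ℙ K V => p P.rep)),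
          Nat.card_prod]

end Projectivization

theorem Nat.card_subtype_ne_and {α : Type*} [Finite α] {p : α → Prop} {x : α} (hx : p x) :
    Nat.card {y // y ≠ x ∧ p y} = Nat.card {y // p y} - 1 := by
  have : {y | y ≠ x ∧ p y} = {y | p y} \ {x} := by ext; simp [and_comm]
  change Nat.card {y | y ≠ x ∧ p y} = Nat.card {y | p y} - 1
  rw [this, Nat.card_coe_set_eq, Set.ncard_sdiff_singleton_of_mem (show x ∈ {y | p y} from hx),
    Nat.card_coe_set_eq]

section Cone

variable {K : Type*} [Field K] [Finite K] {d : ℕ} {a : Fin d → K}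

theorem card_union_lines_eq (ha : Function.Injective a) [NeZero d] :
    Nat.card {p : K × K // ∃ i, a i * p.1 = p.2} = (Nat.card K - 1) * d + 1 := by
  have := Fintype.ofFinite K
  classical
  have hfiber_ne {x : K} (hx : x ≠ 0) : Nat.card (Set.range fun i => a i * x) = d := by
    rw [Nat.card_range_of_injective (f := fun i => a i * x) ((mul_left_injective₀ hx).comp ha),
      Nat.card_fin]
  rw [Nat.card_congr (Equiv.subtypeProdEquivSigmaSubtype fun x y => ∃ i, a i * x = y),
    Nat.card_sigma]
  change ∑ x, Nat.card (Set.range fun i => a i * x) = _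
  rw [← add_sum_erase _ _ (mem_univ 0), sum_congr rfl fun x hx => hfiber_ne (ne_of_mem_erase hx),
    sum_const, card_erase_of_mem (mem_univ _), card_univ, Nat.card_eq_fintype_card, smul_eq_mul]
  simp [add_comm]

theorem card_cone_eq (ha : Function.Injective a) [NeZero d] (m : ℕ) :
    Nat.card {v : Fin (m + 2) → K // ∃ i, a i * v 0 = v 1} =
      ((Nat.card K - 1) * d + 1) * Nat.card K ^ m := by
  let e : (Fin (m + 2) → K) ≃ (K × K) × (Fin m → K) :=
    (Fin.consEquiv _).symm.trans (((Equiv.refl K).prodCongr (Fin.consEquiv _).symm).trans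
      (Equiv.prodAssoc _ _ _).symm)
  let e' : {v : Fin (m + 2) → K // ∃ i, a i * v 0 = v 1} ≃
      {w : K × K // ∃ i, a i * w.1 = w.2} × (Fin m → K) :=
    (e.subtypeEquiv (q := fun w => ∃ i, a i * w.1.1 = w.1.2) fun _ => Iff.rfl).trans
      (Equiv.prodSubtypeFstEquivSubtypeProd (p := fun w : K × K => ∃ i, a i * w.1 = w.2))
  rw [Nat.card_congr e', Nat.card_prod, card_union_lines_eq ha, Nat.card_fun, Nat.card_fin]

end Cone

theorem Nat.eq_mul_pow_add_geom_sum_of_mul_sub_one_eq {q d n N : ℕ} (hq : 1 < q)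
    (h : N * (q - 1) = ((q - 1) * d + 1) * q ^ n - 1) :
    N = d * q ^ n + ∑ i ∈ range n, q ^ i := by
  obtain ⟨r, rfl⟩ : ∃ r, q = r + 1 := ⟨q - 1, by omega⟩
  rw [Nat.add_sub_cancel] at h
  refine Nat.eq_of_mul_eq_mul_right (Nat.pos_of_ne_zero (by omega)) (h.trans ?_)
  rw [← geom_sum_mul_add r n]
  exact Nat.sub_eq_of_eq_add (by ring)

theorem serre_bound_attained_general (q m d : ℕ) (hm : 1 ≤ m)
    (K : Type) [Field K] [Fintype K] (hq : Fintype.card K = q)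
    (a : Fin d → K) (ha : Function.Injective a) (hd1 : 1 ≤ d) :
    Nat.card {P : Projectivization K (Fin (m + 1) → K) //
        MvPolynomial.eval P.rep (∏ i : Fin d, (X (1 : Fin (m + 1)) - C (a i) * X 0)) = 0}
      = d * q ^ (m - 1) + ∑ i ∈ Finset.range (m - 1), q ^ i := by
  obtain ⟨n, rfl⟩ : ∃ n, m = n + 1 := ⟨m - 1, by omega⟩
  have : NeZero d := ⟨by omega⟩
  let cone (v : Fin (n + 2) → K) : Prop := ∃ i, a i * v 0 = v 1
  have hzero (v : Fin (n + 2) → K) : eval v (∏ i : Fin d, (X 1 - C (a i) * X 0)) = 0 ↔ cone v := by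
    simp [cone, prod_eq_zero_iff, sub_eq_zero, eq_comm (a := v 1)]
  have hscale (c : Kˣ) (v : Fin (n + 2) → K) : cone (c • v) ↔ cone v := by
    simp [cone, Units.smul_def, mul_left_comm _ (c : K), mul_right_inj' c.ne_zero]
  have hcount := Projectivization.card_nonzero_subtype_eq_mul K _ cone hscale
  rw [Nat.card_subtype_ne_and (p := cone) ⟨⟨0, by omega⟩, by simp⟩, card_cone_eq ha,
    Nat.card_units, Nat.card_eq_fintype_card, hq] at hcount
  simp_rw [hzero, Nat.add_sub_cancel]
  exact Nat.eq_mul_pow_add_geom_sum_of_mul_sub_one_eq (hq ▸ Fintype.one_lt_card) hcount.symm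

/-- Serre's bound is attained: for distinct `a_1, ..., a_d` in `F_q` with `1 ≤ d ≤ q`, the
polynomial `(x_1 - a_1 x_0) ⋯ (x_1 - a_d x_0)` has exactly `d * q^(m-1) + p_{m-2}` zeros
in `P^m(F_q)`. -/
theorem serre_bound_attained (q m d : ℕ) (hm : 1 ≤ m)
    (K : Type) [Field K] [Fintype K] (hq : Fintype.card K = q)
    (a : Fin d → K) (ha : Function.Injective a) (hd1 : 1 ≤ d) (hdq : d ≤ q) :
    Nat.card {P : Projectivization K (Fin (m + 1) → K) //
        MvPolynomial.eval P.rep (∏ i : Fin d, (X (1 : Fin (m + 1)) - C (a i) * X 0)) = 0}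
      = d * q ^ (m - 1) + ∑ i ∈ Finset.range (m - 1), q ^ i :=
  serre_bound_attained_general q m d hm K hq a ha hd1
end

section
/- The vanishing ideal over F_q of P^m(F_q) is generated by the Fermat polynomials: a homogeneous polynomial F in F_q[x_0,...,x_m] vanishes at all F_q-rational points of P^m if and only if F lies in the ideal generated by {x_i^q x_j - x_i x_j^q : 0 ≤ i < j ≤ m}. -/
open MvPolynomial Finset

/-!
Reduction modulo the Fermat polynomials: `X i ^ q * X j ≡ X i * X j ^ q` moves `q - 1` units
of exponent from `X i` to a later variable `X j`, so every monomial is congruent to one in which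
all exponents before the last variable occurring are at most `q - 1`. A homogeneous reduced `G`
vanishing on `P^m(F_q)` is zero: take `L` least such that some monomial of `G` only involves
`X 0, …, X L`, and put `X L = 1`, `X k = 0` for `k > L`. By minimality, the surviving monomials
all contain `X L`, so their other exponents are below `q`; by homogeneity, distinct monomials stay
distinct. The result is a nonzero polynomial of degree `< q` in each variable vanishing on all of
`F_q^(m+1)`, which is impossible.
-/

def IsReducedExponent (q : ℕ) {m : ℕ} (μ : Fin (m + 1) →₀ ℕ) : Prop :=
  ∀ i j, i < j → μ j ≠ 0 → μ i ≤ q - 1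

theorem Finsupp.eq_of_erase_eq_of_degree_eq {σ : Type*} {μ ν : σ →₀ ℕ} (a : σ)
    (herase : μ.erase a = ν.erase a) (hdeg : μ.degree = ν.degree) : μ = ν := by
  have hsplit (κ : σ →₀ ℕ) : κ.degree = (κ.erase a).degree + κ a := by
    conv_lhs => rw [← Finsupp.single_add_erase a κ]
    rw [map_add, Finsupp.degree_single, add_comm]
  have ha : μ a = ν a := by
    have := hsplit μ
    have := hsplit ν
    rw [herase] at *
    omega
  rw [← Finsupp.single_add_erase a μ, ← Finsupp.single_add_erase a ν, ha, herase]

section Reduction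

variable {q m d : ℕ} {K : Type} [CommRing K]

theorem monomial_sub_monomial_mem_fermatIdeal (τ : Fin (m + 1) →₀ ℕ) {i j : Fin (m + 1)}
    (hij : i < j) (c : K) :
    monomial (τ + Finsupp.single i q + Finsupp.single j 1) c
      - monomial (τ + Finsupp.single i 1 + Finsupp.single j q) c ∈ fermatIdeal q m K := by
  have h : monomial (τ + Finsupp.single i q + Finsupp.single j 1) c
      - monomial (τ + Finsupp.single i 1 + Finsupp.single j q) c
      = monomial τ c * (X i ^ q * X j - X i * X j ^ q) := by
    simp only [mul_sub, X_pow_eq_monomial]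
    simp only [X, monomial_mul, add_assoc, mul_one]
  exact h ▸ Ideal.mul_mem_left _ _ (Ideal.subset_span ⟨i, j, hij, rfl⟩)

theorem exists_isReducedExponent_monomial_sub_mem_fermatIdeal (hq : 2 ≤ q)
    (μ : Fin (m + 1) →₀ ℕ) (c : K) : ∃ ν, ν.degree = μ.degree ∧ IsReducedExponent q ν ∧
      monomial μ c - monomial ν c ∈ fermatIdeal q m K := by
  classical
  induction hw : Finsupp.weight (fun k : Fin (m + 1) => m - k) μ using Nat.strong_induction_on
    generalizing μ with
  | _ n ih =>
  by_cases hμ : IsReducedExponent q μ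
  · exact ⟨μ, rfl, hμ, by simp⟩
  obtain ⟨i, j, hij, hj, hi⟩ : ∃ i j, i < j ∧ μ j ≠ 0 ∧ q - 1 < μ i := by
    simpa [IsReducedExponent] using hμ
  obtain ⟨τ, rfl⟩ : ∃ τ, μ = τ + Finsupp.single i q + Finsupp.single j 1 := by
    obtain ⟨τ, hτ⟩ := exists_add_of_le (show Finsupp.single i q + Finsupp.single j 1 ≤ μ by
      intro k
      rcases eq_or_ne k i with rfl | hki
      · simp [hij.ne]; omega
      rcases eq_or_ne k j with rfl | hkj
      · simp [hki]; omega
      · simp [hki, hkj])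
    exact ⟨τ, by rw [hτ]; abel⟩
  have hweight : Finsupp.weight (fun k : Fin (m + 1) => m - k)
      (τ + Finsupp.single i 1 + Finsupp.single j q) < n := by
    have : (m - j : ℕ) < m - i := by
      have := j.is_lt
      have : (i : ℕ) < j := hij
      omega
    subst hw
    simp only [map_add, Finsupp.weight_single, smul_eq_mul]
    nlinarith
  obtain ⟨ν, hdeg, hred, hmem⟩ := ih _ hweight _ rfl
  refine ⟨ν, by simp [hdeg]; ring, hred, ?_⟩
  simpa using add_mem (monomial_sub_monomial_mem_fermatIdeal τ hij c) hmem

theorem exists_isReducedExponent_sub_mem_fermatIdeal (hq : 2 ≤ q)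
    {F : MvPolynomial (Fin (m + 1)) K} (hF : F.IsHomogeneous d) :
    ∃ G : MvPolynomial (Fin (m + 1)) K, G.IsHomogeneous d ∧
      (∀ ν ∈ G.support, IsReducedExponent q ν) ∧ F - G ∈ fermatIdeal q m K := by
  classical
  choose ν hdeg hred hmem using fun μ =>
    exists_isReducedExponent_monomial_sub_mem_fermatIdeal hq μ (coeff μ F)
  refine ⟨∑ μ ∈ F.support, monomial (ν μ) (coeff μ F),
    IsHomogeneous.sum _ _ d fun μ hμ => ?_, fun κ hκ => ?_, ?_⟩
  · refine isHomogeneous_monomial _ ((hdeg μ).trans ?_)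
    rw [Finsupp.degree_eq_weight_one]
    exact hF (mem_support_iff.mp hμ)
  · obtain ⟨μ, -, hκμ⟩ := Finset.mem_biUnion.mp (support_sum hκ)
    rw [Finset.mem_singleton.mp (support_monomial_subset hκμ)]
    exact hred μ
  · nth_rw 1 [F.as_sum]
    rw [← Finset.sum_sub_distrib]
    exact Ideal.sum_mem _ fun μ _ => hmem μ

end Reduction

section Dehomogenize

variable {m : ℕ} {K : Type} [CommRing K] (L : Fin (m + 1))

noncomputable def chartPoint (v : Fin (m + 1) → K) : Fin (m + 1) → K :=
  fun k => if k < L then v k else if k = L then 1 else 0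

noncomputable def dehomogenize (G : MvPolynomial (Fin (m + 1)) K) :
    MvPolynomial (Fin (m + 1)) K :=
  ∑ μ ∈ G.support with ∀ j, L < j → μ j = 0, monomial (μ.erase L) (coeff μ G)

theorem chartPoint_ne_zero [Nontrivial K] (v : Fin (m + 1) → K) : chartPoint L v ≠ 0 :=
  fun h => by simpa [chartPoint] using congrFun h L

theorem prod_chartPoint_pow (v : Fin (m + 1) → K) (μ : Fin (m + 1) →₀ ℕ) :
    ∏ k, chartPoint L v k ^ μ k
      = if ∀ j, L < j → μ j = 0 then ∏ k, v k ^ μ.erase L k else 0 := by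
  split_ifs with h
  · refine Finset.prod_congr rfl fun k _ => ?_
    rcases lt_trichotomy k L with hk | rfl | hk
    · simp [chartPoint, hk, Finsupp.erase_ne hk.ne]
    · simp [chartPoint]
    · simp [h k hk, Finsupp.erase_ne hk.ne']
  · obtain ⟨j, hj, hμj⟩ := not_forall₂.mp h
    exact Finset.prod_eq_zero (Finset.mem_univ j)
      (by simp [chartPoint, not_lt.2 hj.le, hj.ne', zero_pow hμj])

theorem eval_dehomogenize (v : Fin (m + 1) → K) (G : MvPolynomial (Fin (m + 1)) K) :
    eval v (dehomogenize L G) = eval (chartPoint L v) G := by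
  rw [eval_eq' (chartPoint L v), dehomogenize, map_sum, Finset.sum_filter]
  refine Finset.sum_congr rfl fun μ _ => ?_
  rw [prod_chartPoint_pow]
  split_ifs <;> simp [eval_monomial, Finsupp.prod_fintype]

theorem coeff_erase_dehomogenize {G : MvPolynomial (Fin (m + 1)) K} {d : ℕ}
    (hG : G.IsHomogeneous d) {μ : Fin (m + 1) →₀ ℕ} (hμ : μ ∈ G.support)
    (hμL : ∀ j, L < j → μ j = 0) : coeff (μ.erase L) (dehomogenize L G) = coeff μ G := by
  classical
  rw [dehomogenize, coeff_sum, Finset.sum_eq_single μ (fun ν hν hνμ => ?_) (fun h => ?_),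
    coeff_monomial, if_pos rfl]
  · rw [coeff_monomial, if_neg]
    refine fun herase => hνμ (Finsupp.eq_of_erase_eq_of_degree_eq L herase ?_)
    rw [Finsupp.degree_eq_weight_one]
    exact (hG (mem_support_iff.mp (Finset.mem_filter.mp hν).1)).trans
      (hG (mem_support_iff.mp hμ)).symm
  · exact absurd (Finset.mem_filter.mpr ⟨hμ, hμL⟩) h

theorem dehomogenize_mem_restrictDegree {G : MvPolynomial (Fin (m + 1)) K} {n : ℕ}
    (hG : ∀ μ ∈ G.support, (∀ j, L < j → μ j = 0) → ∀ i < L, μ i ≤ n) :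
    dehomogenize L G ∈ restrictDegree (Fin (m + 1)) K n := by
  classical
  rw [mem_restrictDegree]
  intro ν hν i
  obtain ⟨μ, hμ, hνμ⟩ := Finset.mem_biUnion.mp (support_sum hν)
  obtain ⟨hμG, hμL⟩ := Finset.mem_filter.mp hμ
  rw [Finset.mem_singleton.mp (support_monomial_subset hνμ)]
  rcases lt_trichotomy i L with hi | rfl | hi
  · rw [Finsupp.erase_ne hi.ne]
    exact hG μ hμG hμL i hi
  · simp
  · simp [Finsupp.erase_ne hi.ne', hμL i hi]

end Dehomogenize

section FiniteField

variable {q m d : ℕ} {K : Type} [Field K] [Fintype K]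

theorem eval_eq_zero_of_mem_fermatIdeal (hq : Fintype.card K = q)
    {F : MvPolynomial (Fin (m + 1)) K} (hF : F ∈ fermatIdeal q m K) (x : Fin (m + 1) → K) :
    eval x F = 0 := by
  refine (Ideal.span_le (I := RingHom.ker (eval x)).mpr ?_) hF
  rintro _ ⟨i, j, -, rfl⟩
  simp [← hq, FiniteField.pow_card]

theorem eq_zero_of_isReducedExponent_of_eval_eq_zero (hq : Fintype.card K = q)
    {G : MvPolynomial (Fin (m + 1)) K} (hG : G.IsHomogeneous d)
    (hred : ∀ μ ∈ G.support, IsReducedExponent q μ) (hvan : ∀ x, x ≠ 0 → eval x G = 0) :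
    G = 0 := by
  classical
  by_contra hG0
  have hex : ∃ ℓ : ℕ, ∃ μ ∈ G.support, ∀ j : Fin (m + 1), ℓ < j → μ j = 0 :=
    ⟨m, (support_nonempty.mpr hG0).choose, (support_nonempty.mpr hG0).choose_spec,
      fun j hj => absurd j.is_lt (by omega)⟩
  obtain ⟨μ₀, hμ₀, hμ₀L⟩ := Nat.find_spec hex
  have hℓ : Nat.find hex < m + 1 :=
    (Nat.find_min' hex ⟨μ₀, hμ₀, fun j hj => absurd j.is_lt (by omega)⟩).trans_lt m.lt_succ_self
  set L : Fin (m + 1) := ⟨Nat.find hex, hℓ⟩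
  have hLval : (L : ℕ) = Nat.find hex := rfl
  have hsmall : ∀ μ ∈ G.support, (∀ j, L < j → μ j = 0) → ∀ i < L, μ i ≤ q - 1 := by
    intro μ hμ hμL i hi
    have : (i : ℕ) < L := hi
    refine hred μ hμ i L hi fun hμL0 => Nat.find_min hex (m := Nat.find hex - 1) (by omega)
      ⟨μ, hμ, fun j hj => ?_⟩
    rcases (show L ≤ j from Fin.le_def.mpr (by omega)).eq_or_lt with rfl | hj
    · exact hμL0
    · exact hμL j hj
  have hdeh := eq_zero_of_eval_eq_zero _ _ (dehomogenize L G)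
    (fun v => by rw [eval_dehomogenize]; exact hvan _ (chartPoint_ne_zero L v))
    (hq ▸ dehomogenize_mem_restrictDegree L hsmall)
  have hcoeff := coeff_erase_dehomogenize L hG hμ₀ hμ₀L
  rw [hdeh, coeff_zero] at hcoeff
  exact mem_support_iff.mp hμ₀ hcoeff.symm

end FiniteField

/-- Mercier–Rolland: a homogeneous polynomial over `F_q` vanishes at all `F_q`-rational
points of `P^m` iff it lies in the ideal generated by the Fermat polynomials. -/
theorem vanishing_iff_mem_fermatIdeal (q m d : ℕ)
    (K : Type) [Field K] [Fintype K] (hq : Fintype.card K = q)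
    (F : MvPolynomial (Fin (m + 1)) K) (hFhom : F.IsHomogeneous d) :
    (∀ x : Fin (m + 1) → K, x ≠ 0 → MvPolynomial.eval x F = 0) ↔ F ∈ fermatIdeal q m K := by
  refine ⟨fun hvan => ?_, fun hF x _ => eval_eq_zero_of_mem_fermatIdeal hq hF x⟩
  obtain ⟨G, hG, hred, hFG⟩ :=
    exists_isReducedExponent_sub_mem_fermatIdeal (hq ▸ Fintype.one_lt_card) hFhom
  have hG0 : G = 0 := eq_zero_of_isReducedExponent_of_eval_eq_zero hq hG hred fun x hx => by
    simpa [hvan x hx] using eval_eq_zero_of_mem_fermatIdeal hq hFG x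
  simpa [hG0] using hFG
end

section
/- A monomial and its projective reduction take the same values on F_q-rational projective points: for every monomial μ in x_0,...,x_m and every (a_0,...,a_m) ∈ F_q^{m+1}, μ(a_0,...,a_m) = μ̄(a_0,...,a_m). -/
open MvPolynomial Finset

/-! The reduction only changes exponents by multiples of `q - 1` and never turns a nonzero
exponent into zero, and on a finite field with `q` elements `x ^ n` depends on nothing more:
`x ^ (q - 1) = 1` for `x ≠ 0`, while `0 ^ n` only sees whether `n = 0`. So every factor of the
monomial keeps its value, the top variable included. -/

lemma redExp_eq_zero_iff {q n : ℕ} : redExp q n = 0 ↔ n = 0 := by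
  unfold redExp
  split <;> omega

lemma redExp_add_mul (q n : ℕ) : ∃ t, n = redExp q n + (q - 1) * t := by
  unfold redExp
  split
  · exact ⟨0, by simp⟩
  · refine ⟨(n - 1) / (q - 1), ?_⟩
    have := Nat.div_add_mod (n - 1) (q - 1)
    omega

lemma dvd_sub_redExp (q n : ℕ) : q - 1 ∣ n - redExp q n := by
  obtain ⟨t, ht⟩ := redExp_add_mul q n
  exact ⟨t, by omega⟩

namespace FiniteField

variable {K : Type*} [GroupWithZero K] [Fintype K]

lemma pow_add_mul_card_sub_one (x : K) {n : ℕ} (hn : n ≠ 0) (t : ℕ) :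
    x ^ (n + (Fintype.card K - 1) * t) = x ^ n := by
  rcases eq_or_ne x 0 with rfl | hx
  · rw [zero_pow hn, zero_pow (by omega)]
  · rw [pow_add, pow_mul, pow_card_sub_one_eq_one x hx, one_pow, mul_one]

lemma pow_redExp_card (x : K) (n : ℕ) : x ^ redExp (Fintype.card K) n = x ^ n := by
  rcases eq_or_ne n 0 with rfl | hn
  · rw [redExp_eq_zero_iff.mpr rfl]
  · obtain ⟨t, ht⟩ := redExp_add_mul (Fintype.card K) n
    conv_rhs => rw [ht]
    exact (pow_add_mul_card_sub_one x (redExp_eq_zero_iff.not.mpr hn) t).symm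

end FiniteField

section projRed

variable {q m : ℕ}

lemma projRed_of_support_eq_empty {μ : Fin (m + 1) →₀ ℕ} (h : μ.support = ∅) :
    projRed q μ = 0 := by
  simp [projRed, h]

lemma projRed_apply {μ : Fin (m + 1) →₀ ℕ} (h : μ.support.Nonempty) (i : Fin (m + 1)) :
    projRed q μ i =
      if i < μ.support.max' h then redExp q (μ i)
      else if i = μ.support.max' h then
        μ (μ.support.max' h) +
          ∑ j ∈ univ.filter (· < μ.support.max' h), (μ j - redExp q (μ j))
      else 0 := by
  simp only [projRed, dif_pos h]
  rfl

lemma FiniteField.pow_projRed_card_apply {K : Type*} [GroupWithZero K] [Fintype K]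
    (μ : Fin (m + 1) →₀ ℕ) (x : K) (i : Fin (m + 1)) :
    x ^ projRed (Fintype.card K) μ i = x ^ μ i := by
  rcases μ.support.eq_empty_or_nonempty with h | h
  · rw [projRed_of_support_eq_empty h, Finsupp.support_eq_empty.mp h]
  set ℓ := μ.support.max' h
  rw [projRed_apply h]
  rcases lt_trichotomy i ℓ with hlt | rfl | hgt
  · rw [if_pos hlt, pow_redExp_card]
  · rw [if_neg (lt_irrefl _), if_pos rfl]
    obtain ⟨t, ht⟩ : Fintype.card K - 1 ∣
        ∑ j ∈ univ.filter (· < ℓ), (μ j - redExp (Fintype.card K) (μ j)) :=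
      dvd_sum fun j _ => dvd_sub_redExp _ (μ j)
    rw [ht, pow_add_mul_card_sub_one x (Finsupp.mem_support_iff.mp (μ.support.max'_mem h))]
  · have hμi : μ i = 0 :=
      Finsupp.notMem_support_iff.mp fun hi => (μ.support.le_max' i hi).not_gt hgt
    rw [if_neg hgt.not_gt, if_neg hgt.ne', hμi]

end projRed

/-- A monomial and its projective reduction take the same values on points of `F_q^{m+1}`. -/
theorem projRed_eval_eq (q m : ℕ) (K : Type) [Field K] [Fintype K] (hq : Fintype.card K = q)
    (μ : Fin (m + 1) →₀ ℕ) (a : Fin (m + 1) → K) :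
    (∏ i, a i ^ μ i) = ∏ i, a i ^ (projRed q μ i) := by
  subst hq
  exact prod_congr rfl fun i _ => (FiniteField.pow_projRed_card_apply μ (a i) i).symm
end

section
/- The difference between any monomial μ and its projective reduction μ̄ lies in the ideal generated by the Fermat polynomials: μ - μ̄ ∈ Γ_q(k) = ⟨x_i^q x_j - x_i x_j^q : 0 ≤ i < j ≤ m⟩ in k[x_0,...,x_m], for any field k containing F_q. -/
open MvPolynomial Finset

/-!
Modulo the Fermat ideal, `x_i ^ q * x_j = x_i * x_j ^ q` for `i < j`, so a monomial is congruent
to the one obtained by moving `q - 1` from the exponent of `x_i` to that of `x_j`, provided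
both exponents stay positive. Taking `j` to be the top variable `ℓ` of the support (whose
exponent only grows) and repeating this for every `i < ℓ` until its exponent lies in
`{1, …, q - 1}` produces exactly the projective reduction.
-/

section FermatRelation

variable {M : Type*} [CommMonoid M] {q : ℕ} {x y : M}

theorem pow_add_mul_pow_succ_eq (h : x ^ q * y = x * y ^ q) (c d : ℕ) :
    x ^ (c + q) * y ^ (d + 1) = x ^ (c + 1) * y ^ (d + q) := by
  calc x ^ (c + q) * y ^ (d + 1) = x ^ c * y ^ d * (x ^ q * y) := by
        simp only [pow_add, pow_one]; ac_rfl
    _ = x ^ c * y ^ d * (x * y ^ q) := by rw [h]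
    _ = x ^ (c + 1) * y ^ (d + q) := by simp only [pow_add, pow_one]; ac_rfl

theorem pow_add_mul_mul_pow_succ_eq (h : x ^ q * y = x * y ^ q) (a b t : ℕ) :
    x ^ (a + 1 + t * (q - 1)) * y ^ (b + 1) = x ^ (a + 1) * y ^ (b + 1 + t * (q - 1)) := by
  rcases q with _ | p
  · simp
  rw [Nat.add_sub_cancel]
  induction t generalizing b with
  | zero => simp
  | succ t ih =>
    calc x ^ (a + 1 + (t + 1) * p) * y ^ (b + 1)
        = x ^ (a + t * p + (p + 1)) * y ^ (b + 1) := by ring_nf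
      _ = x ^ (a + t * p + 1) * y ^ (b + p + 1) := pow_add_mul_pow_succ_eq h _ _
      _ = x ^ (a + 1) * y ^ (b + p + 1 + t * p) := by rw [add_right_comm, ih]
      _ = x ^ (a + 1) * y ^ (b + 1 + (t + 1) * p) := by ring_nf

theorem pow_mul_pow_eq_pow_redExp_mul_pow (h : x ^ q * y = x * y ^ q) (a : ℕ) {b : ℕ}
    (hb : 0 < b) : x ^ a * y ^ b = x ^ redExp q a * y ^ (b + (a - redExp q a)) := by
  unfold redExp
  split_ifs with ha
  · simp
  obtain ⟨b, rfl⟩ : ∃ c, b = c + 1 := ⟨b - 1, by omega⟩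
  have hdiv := Nat.mod_add_div (a - 1) (q - 1)
  generalize (a - 1) % (q - 1) = r, (a - 1) / (q - 1) = t at hdiv ⊢
  obtain rfl : a = r + 1 + t * (q - 1) := by rw [mul_comm] at hdiv; omega
  rw [Nat.add_sub_cancel_left, pow_add_mul_mul_pow_succ_eq h]

end FermatRelation

theorem prod_pow_mul_pow_eq_prod_pow_redExp_mul_pow {ι M : Type*} [DecidableEq ι]
    [CommMonoid M] {q : ℕ} (s : Finset ι) (x : ι → M) {y : M}
    (h : ∀ i ∈ s, x i ^ q * y = x i * y ^ q) (e : ι → ℕ) {b : ℕ} (hb : 0 < b) :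
    (∏ i ∈ s, x i ^ e i) * y ^ b
      = (∏ i ∈ s, x i ^ redExp q (e i)) * y ^ (b + ∑ i ∈ s, (e i - redExp q (e i))) := by
  induction s using Finset.induction_on with
  | empty => simp
  | insert j s hj ih =>
    rw [prod_insert hj, prod_insert hj, sum_insert hj, mul_assoc,
      ih fun i hi => h i (mem_insert_of_mem hi), mul_left_comm,
      pow_mul_pow_eq_pow_redExp_mul_pow (h j (mem_insert_self j s)) _ (by omega)]
    simp only [mul_assoc, mul_left_comm, add_assoc, add_comm (e j - _)]

theorem Finset.prod_eq_prod_filter_lt_mul {ι M : Type*} [LinearOrder ι] [Fintype ι]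
    [CommMonoid M] (f : ι → M) {l : ι} (hf : ∀ i, l < i → f i = 1) :
    ∏ i, f i = (∏ i ∈ univ.filter (· < l), f i) * f l := by
  rw [← prod_filter_mul_prod_filter_not univ (· < l)]
  congr 1
  refine prod_eq_single_of_mem l (by simp) fun i hi hil => hf i ?_
  simp only [mem_filter, mem_univ, true_and, not_lt] at hi
  exact lt_of_le_of_ne hi (Ne.symm hil)

theorem Finsupp.apply_eq_zero_of_max'_lt {α M : Type*} [LinearOrder α] [Zero M] (f : α →₀ M)
    (hf : f.support.Nonempty) {i : α} (hi : f.support.max' hf < i) : f i = 0 := by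
  by_contra hne
  exact not_lt_of_ge (le_max' _ i (mem_support_iff.2 hne)) hi

theorem projRed_zero (q : ℕ) {m : ℕ} : projRed q (0 : Fin (m + 1) →₀ ℕ) = 0 := by
  simp [projRed]

section ProjRed

variable {q m : ℕ} (μ : Fin (m + 1) →₀ ℕ)

theorem projRed_apply_of_lt (hμ : μ.support.Nonempty) {i : Fin (m + 1)}
    (hi : i < μ.support.max' hμ) : projRed q μ i = redExp q (μ i) := by
  simp [projRed, hμ, hi]

theorem projRed_apply_max' (hμ : μ.support.Nonempty) :
    projRed q μ (μ.support.max' hμ) = μ (μ.support.max' hμ)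
      + ∑ j ∈ univ.filter (· < μ.support.max' hμ), (μ j - redExp q (μ j)) := by
  simp [projRed, hμ]

theorem projRed_apply_of_max'_lt (hμ : μ.support.Nonempty) {i : Fin (m + 1)}
    (hi : μ.support.max' hμ < i) : projRed q μ i = 0 := by
  simp [projRed, hμ, not_lt_of_gt hi, hi.ne']

end ProjRed

theorem prod_pow_projRed {M : Type*} [CommMonoid M] (q : ℕ) {m : ℕ} (x : Fin (m + 1) → M)
    (h : ∀ i j, i < j → x i ^ q * x j = x i * x j ^ q) (μ : Fin (m + 1) →₀ ℕ) :
    ∏ i, x i ^ projRed q μ i = ∏ i, x i ^ μ i := by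
  rcases μ.support.eq_empty_or_nonempty with hμ | hμ
  · rw [Finsupp.support_eq_empty.1 hμ, projRed_zero]
  set l := μ.support.max' hμ
  have hl : 0 < μ l := Nat.pos_of_ne_zero (Finsupp.mem_support_iff.1 (max'_mem _ hμ))
  rw [prod_eq_prod_filter_lt_mul _ fun i hi => by rw [projRed_apply_of_max'_lt μ hμ hi, pow_zero],
    prod_eq_prod_filter_lt_mul _ fun i hi => by rw [μ.apply_eq_zero_of_max'_lt hμ hi, pow_zero],
    prod_pow_mul_pow_eq_prod_pow_redExp_mul_pow _ x (fun i hi => h i l (mem_filter.1 hi).2) μ hl,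
    projRed_apply_max']
  congr 1
  exact prod_congr rfl fun i hi => by rw [projRed_apply_of_lt μ hμ (mem_filter.1 hi).2]

theorem monomial_one_eq_prod_pow {σ R : Type*} [Fintype σ] [CommSemiring R] (μ : σ →₀ ℕ) :
    monomial μ (1 : R) = ∏ i, X i ^ μ i := by
  rw [monomial_eq, C_1, one_mul, Finsupp.prod_pow]

theorem monomial_sub_projRed_mem_fermatIdeal_general (q m : ℕ)
    (k : Type) [Field k] (μ : Fin (m + 1) →₀ ℕ) :
    monomial μ (1 : k) - monomial (projRed q μ) (1 : k) ∈ fermatIdeal q m k := by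
  rw [← Ideal.Quotient.eq, monomial_one_eq_prod_pow, monomial_one_eq_prod_pow, map_prod, map_prod]
  simp only [map_pow]
  refine (prod_pow_projRed q _ (fun i j hij => ?_) μ).symm
  simp only [← map_pow, ← map_mul]
  exact Ideal.Quotient.eq.2 (Ideal.subset_span ⟨i, j, hij, rfl⟩)

/-- The difference between a monomial and its projective reduction lies in the ideal
generated by the Fermat polynomials, over any field `k` containing `F_q`. -/
theorem monomial_sub_projRed_mem_fermatIdeal (q m : ℕ)
    (Fq : Type) [Field Fq] [Fintype Fq] (hq : Fintype.card Fq = q)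
    (k : Type) [Field k] [Algebra Fq k] (μ : Fin (m + 1) →₀ ℕ) :
    monomial μ (1 : k) - monomial (projRed q μ) (1 : k) ∈ fermatIdeal q m k :=
  monomial_sub_projRed_mem_fermatIdeal_general q m k μ
end

section
/- Shadow count: Let 1 ≤ d ≤ q and ν = x_0^{b_0}···x_ℓ^{b_ℓ} be a monomial of degree d with b_ℓ > 0. For all sufficiently large e, the number of projectively reduced monomials of degree e divisible by ν equals (q-b_0)···(q-b_{ℓ-1})·(1 + (q-b_ℓ)·p_{m-ℓ-1}). -/
open MvPolynomial Finset

/-!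
A projectively reduced monomial `μ ≥ ν` of large degree `e` has its top variable `t` at or
above `ℓ`, and it is determined by `t` and by its exponents below `t`, which range independently
over `[ν i, q - 1]`: the exponent of `x_t` is what is left of `e`, and it is automatically
`≥ ν t` once `e` is large. Hence the count is `∑_{ℓ ≤ t ≤ m} ∏_{i < t} (q - ν i)`, and as
`ν i = 0` for `i > ℓ` this is a geometric series in `q`.
-/

theorem redExp_eq_self_iff {q a : ℕ} (hq : 2 ≤ q) : redExp q a = a ↔ a ≤ q - 1 := by
  refine ⟨fun h => ?_, fun h => if_pos h⟩
  by_contra hc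
  rw [redExp, if_neg hc] at h
  have := Nat.mod_lt (a - 1) (by omega : 0 < q - 1)
  omega

theorem Finsupp.support_max'_eq {ι M : Type*} [LinearOrder ι] [Zero M] {μ : ι →₀ M} {t : ι}
    (ht : μ t ≠ 0) (hgt : ∀ i, t < i → μ i = 0) (h : μ.support.Nonempty) :
    μ.support.max' h = t :=
  le_antisymm
    (Finset.max'_le _ _ _ fun i hi => not_lt.mp fun hti => mem_support_iff.mp hi (hgt i hti))
    (Finset.le_max' _ _ (mem_support_iff.mpr ht))

theorem projRed_eq_self_iff {q m : ℕ} (hq : 2 ≤ q) {μ : Fin (m + 1) →₀ ℕ} {t : Fin (m + 1)}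
    (ht : μ t ≠ 0) (hgt : ∀ i, t < i → μ i = 0) :
    projRed q μ = μ ↔ ∀ i < t, μ i ≤ q - 1 := by
  have hne : μ.support.Nonempty := ⟨t, Finsupp.mem_support_iff.mpr ht⟩
  rw [projRed, dif_pos hne, Finsupp.support_max'_eq ht hgt hne, Finsupp.ext_iff]
  simp only [Finsupp.equivFunOnFinite_symm_apply_apply]
  refine ⟨fun h i hi => ?_, fun h i => ?_⟩
  · simpa [hi, redExp_eq_self_iff hq] using h i
  · rcases lt_trichotomy i t with hi | rfl | hi
    · simp [hi, (redExp_eq_self_iff hq).mpr (h i hi)]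
    · rw [if_neg (lt_irrefl i), if_pos rfl, sum_eq_zero, add_zero]
      intro j hj
      rw [(redExp_eq_self_iff hq).mpr (h j (by simpa using hj)), Nat.sub_self]
    · rw [if_neg (not_lt.mpr hi.le), if_neg hi.ne', hgt i hi]

theorem Fin.prod_Iio_eq_mul_pow {R : Type*} [CommMonoid R] {m : ℕ} {w : Fin (m + 1) → R} {c : R}
    {ℓ t : Fin (m + 1)} (hw : ∀ i, ℓ < i → w i = c) (hℓt : ℓ < t) :
    ∏ i ∈ Iio t, w i = (∏ i ∈ Iio ℓ, w i) * (w ℓ * c ^ ((t : ℕ) - ℓ - 1)) := by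
  have hIoo : ∏ i ∈ Ioo ℓ t, w i = c ^ ((t : ℕ) - ℓ - 1) := by
    rw [prod_congr rfl fun i hi => hw i (mem_Ioo.mp hi).1, Finset.prod_const, Fin.card_Ioo]
  rw [Iio_eq_Ico, Iio_eq_Ico, ← Ico_union_Ico_eq_Ico bot_le hℓt.le,
    prod_union (Ico_disjoint_Ico_consecutive _ _ _), Ico_eq_cons_Ioo hℓt, Finset.prod_cons, hIoo]

theorem Fin.sum_Ioc_last_pow {R : Type*} [CommSemiring R] (c : R) {m : ℕ} (ℓ : Fin (m + 1)) :
    ∑ t ∈ Ioc ℓ (Fin.last m), c ^ ((t : ℕ) - ℓ - 1) = ∑ j ∈ range (m - ℓ), c ^ j := by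
  calc ∑ t ∈ Ioc ℓ (Fin.last m), c ^ ((t : ℕ) - ℓ - 1)
      = ∑ k ∈ (Ioc ℓ (Fin.last m)).map Fin.valEmbedding, c ^ (k - ℓ - 1) := by rw [sum_map]; rfl
    _ = ∑ j ∈ range (m - ℓ), c ^ j := by
      rw [Fin.map_valEmbedding_Ioc, Fin.val_last, ← Ico_add_one_add_one_eq_Ioc,
        sum_Ico_eq_sum_range]
      refine sum_congr (by congr 1; omega) fun j _ => ?_
      congr 1; omega

theorem Fin.sum_Icc_last_prod_Iio {R : Type*} [CommSemiring R] {m : ℕ} {w : Fin (m + 1) → R}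
    {c : R} {ℓ : Fin (m + 1)} (hw : ∀ i, ℓ < i → w i = c) :
    ∑ t ∈ Icc ℓ (Fin.last m), ∏ i ∈ Iio t, w i =
      (∏ i ∈ Iio ℓ, w i) * (1 + w ℓ * ∑ j ∈ range (m - ℓ), c ^ j) := by
  rw [Icc_eq_cons_Ioc (Fin.le_last ℓ), Finset.sum_cons,
    sum_congr rfl fun t ht => Fin.prod_Iio_eq_mul_pow hw (mem_Ioc.mp ht).1, ← mul_sum, ← mul_sum,
    Fin.sum_Ioc_last_pow]
  ring

section ShadowCount

variable {q m e : ℕ} {ν g μ : Fin (m + 1) →₀ ℕ} {ℓ t : Fin (m + 1)}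

noncomputable def belowBox (q : ℕ) (ν : Fin (m + 1) →₀ ℕ) (t : Fin (m + 1)) :
    Finset (Fin (m + 1) →₀ ℕ) :=
  (Iio t).finsupp fun i => Icc (ν i) (q - 1)

theorem mem_belowBox :
    g ∈ belowBox q ν t ↔ (∀ i, t ≤ i → g i = 0) ∧ ∀ i < t, ν i ≤ g i ∧ g i ≤ q - 1 := by
  simp only [belowBox, mem_finsupp_iff, mem_Iio, mem_Icc, subset_iff, Finsupp.mem_support_iff]
  refine and_congr ⟨fun h i hi => ?_, fun h i hi => ?_⟩ Iff.rfl
  · by_contra h'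
    exact (h h').not_ge hi
  · by_contra h'
    exact hi (h i (not_lt.mp h'))

theorem card_belowBox (hq : 1 ≤ q) (t : Fin (m + 1)) :
    #(belowBox q ν t) = ∏ i ∈ Iio t, (q - ν i) := by
  rw [belowBox, card_finsupp]
  refine prod_congr rfl fun i _ => ?_
  rw [Nat.card_Icc]
  omega

theorem sum_le_of_mem_belowBox (hg : g ∈ belowBox q ν t) : ∑ i, g i ≤ (m + 1) * (q - 1) := by
  obtain ⟨hzero, hbox⟩ := mem_belowBox.mp hg
  calc ∑ i, g i ≤ #(univ : Finset (Fin (m + 1))) • (q - 1) :=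
        sum_le_card_nsmul _ _ _ fun i _ => (lt_or_ge i t).elim (fun hi => (hbox i hi).2)
          fun hi => (hzero i hi).trans_le (Nat.zero_le _)
    _ = (m + 1) * (q - 1) := by simp

noncomputable def completeAt (e : ℕ) (t : Fin (m + 1)) (g : Fin (m + 1) →₀ ℕ) :
    Fin (m + 1) →₀ ℕ :=
  g + Finsupp.single t (e - ∑ i, g i)

theorem completeAt_apply (hg : g t = 0) (i : Fin (m + 1)) :
    completeAt e t g i = if i = t then e - ∑ j, g j else g i := by
  by_cases hi : i = t
  · subst hi; simp [completeAt, hg]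
  · simp [completeAt, hi, Finsupp.single_eq_of_ne hi]

theorem sum_completeAt (h : ∑ i, g i ≤ e) : ∑ i, completeAt e t g i = e := by
  simp only [completeAt, Finsupp.add_apply, sum_add_distrib, Finsupp.univ_sum_single_apply]
  omega

theorem erase_completeAt (hg : g t = 0) : (completeAt e t g).erase t = g := by
  ext i
  by_cases hi : i = t
  · simp [hi, hg]
  · rw [Finsupp.erase_ne hi, completeAt_apply hg, if_neg hi]

theorem completeAt_erase (hμ : ∑ i, μ i = e) : completeAt e t (μ.erase t) = μ := by
  have hsplit : ∑ i, μ.erase t i + μ t = e := by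
    conv_rhs => rw [← hμ, ← Finsupp.erase_add_single t μ]
    simp only [Finsupp.add_apply, sum_add_distrib, Finsupp.univ_sum_single_apply]
  rw [completeAt, show e - ∑ i, μ.erase t i = μ t by omega, Finsupp.erase_add_single]

theorem completeAt_top (hg : g ∈ belowBox q ν t) (he : (m + 1) * (q - 1) < e) :
    completeAt e t g t ≠ 0 ∧ ∀ i, t < i → completeAt e t g i = 0 := by
  obtain ⟨hzero, -⟩ := mem_belowBox.mp hg
  have := sum_le_of_mem_belowBox hg
  refine ⟨?_, fun i hi => ?_⟩
  · rw [completeAt_apply (hzero t le_rfl), if_pos rfl]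
    omega
  · rw [completeAt_apply (hzero t le_rfl), if_neg hi.ne', hzero i hi.le]

variable (q ν ℓ) in
/-- Pairs `⟨t, g⟩` of a top variable `t` and exponents `g` below it; for large `e`,
`completeAt e` maps them bijectively onto the reduced monomials of degree `e` divisible by `ν`. -/
noncomputable def shadowIndex : Finset (Σ _ : Fin (m + 1), Fin (m + 1) →₀ ℕ) :=
  (Icc ℓ (Fin.last m)).sigma (belowBox q ν)

theorem completeAt_injOn (he : (m + 1) * (q - 1) < e) :
    Set.InjOn (fun p : Σ _ : Fin (m + 1), Fin (m + 1) →₀ ℕ => completeAt e p.1 p.2)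
      (shadowIndex q ν ℓ : Set _) := by
  rintro ⟨t, g⟩ hp ⟨t', g'⟩ hp' (h : completeAt e t g = completeAt e t' g')
  have hg : g ∈ belowBox q ν t := (mem_sigma.mp hp).2
  have hg' : g' ∈ belowBox q ν t' := (mem_sigma.mp hp').2
  obtain ⟨ht, hgt⟩ := completeAt_top hg he
  obtain ⟨ht', hgt'⟩ := completeAt_top hg' he
  have hne : (completeAt e t g).support.Nonempty := ⟨t, Finsupp.mem_support_iff.mpr ht⟩
  obtain rfl : t = t' := by
    rw [← Finsupp.support_max'_eq ht hgt hne, ← Finsupp.support_max'_eq ht' hgt' (h ▸ hne)]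
    simp only [h]
  congr
  rw [← erase_completeAt ((mem_belowBox.mp hg).1 t le_rfl) (e := e),
    ← erase_completeAt ((mem_belowBox.mp hg').1 t le_rfl) (e := e), h]

theorem le_completeAt (hν : ∀ i, ℓ < i → ν i = 0) (hℓt : ℓ ≤ t) (hg : g ∈ belowBox q ν t)
    (he : (m + 1) * (q - 1) + ν ℓ ≤ e) : ν ≤ completeAt e t g := by
  obtain ⟨hzero, hbox⟩ := mem_belowBox.mp hg
  have hsum := sum_le_of_mem_belowBox hg
  intro i
  rw [completeAt_apply (hzero t le_rfl)]
  split_ifs with hit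
  · subst hit
    rcases hℓt.lt_or_eq with hℓi | rfl
    · simp [hν i hℓi]
    · omega
  · rcases lt_or_gt_of_ne hit with hi | hi
    · exact (hbox i hi).1
    · simp [hν i (hℓt.trans_lt hi)]

theorem mem_image_shadowIndex_iff (hq : 2 ≤ q) (hνℓ : ν ℓ ≠ 0) (hν : ∀ i, ℓ < i → ν i = 0)
    (he : (m + 1) * (q - 1) + ν ℓ ≤ e) :
    μ ∈ (shadowIndex q ν ℓ).image (fun p => completeAt e p.1 p.2) ↔
      ∑ i, μ i = e ∧ projRed q μ = μ ∧ ν ≤ μ := by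
  have he' : (m + 1) * (q - 1) < e := by omega
  rw [mem_image]
  constructor
  · rintro ⟨⟨t, g⟩, hp, rfl⟩
    obtain ⟨hℓt, hg⟩ : t ∈ Icc ℓ (Fin.last m) ∧ g ∈ belowBox q ν t := mem_sigma.mp hp
    obtain ⟨ht, hgt⟩ := completeAt_top hg he'
    refine ⟨sum_completeAt (by linarith [sum_le_of_mem_belowBox hg]),
      (projRed_eq_self_iff hq ht hgt).mpr fun i hi => ?_,
      le_completeAt hν (mem_Icc.mp hℓt).1 hg he⟩
    rw [completeAt_apply ((mem_belowBox.mp hg).1 t le_rfl), if_neg hi.ne]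
    exact ((mem_belowBox.mp hg).2 i hi).2
  · rintro ⟨hsum, hfix, hle⟩
    have hℓ : ℓ ∈ μ.support :=
      Finsupp.mem_support_iff.mpr fun h => hνℓ (by simpa [h] using hle ℓ)
    set t := μ.support.max' ⟨ℓ, hℓ⟩
    have ht : μ t ≠ 0 := Finsupp.mem_support_iff.mp (max'_mem _ _)
    have hgt : ∀ i, t < i → μ i = 0 := fun i hi =>
      Finsupp.notMem_support_iff.mp fun h => (le_max' _ i h).not_gt hi
    have hbox := (projRed_eq_self_iff hq ht hgt).mp hfix
    refine ⟨⟨t, μ.erase t⟩, mem_sigma.mpr ⟨mem_Icc.mpr ⟨le_max' _ ℓ hℓ, Fin.le_last t⟩,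
      mem_belowBox.mpr ⟨fun i hi => ?_, fun i hi => ?_⟩⟩, completeAt_erase hsum⟩
    · rcases hi.lt_or_eq with hi | rfl
      · rw [Finsupp.erase_ne hi.ne', hgt i hi]
      · exact Finsupp.erase_same
    · rw [Finsupp.erase_ne hi.ne]
      exact ⟨hle i, hbox i hi⟩

end ShadowCount

theorem card_shadow_general (q m : ℕ) (hq : IsPrimePow q)
    (ν : Fin (m + 1) →₀ ℕ) (ℓ : Fin (m + 1))
    (hνℓ : ν ℓ ≠ 0) (hsupp : ∀ i, ν i ≠ 0 → i ≤ ℓ) :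
    ∃ e₀ : ℕ, ∀ e ≥ e₀,
      Nat.card {μ : Fin (m + 1) →₀ ℕ // (∑ i, μ i) = e ∧ projRed q μ = μ ∧ ν ≤ μ}
        = (∏ i ∈ Finset.univ.filter (· < ℓ), (q - ν i)) *
            (1 + (q - ν ℓ) * ∑ i ∈ Finset.range (m - (ℓ : ℕ)), q ^ i) := by
  have hq2 := hq.two_le
  have hν : ∀ i, ℓ < i → ν i = 0 := fun i hi => by_contra fun h => (hsupp i h).not_gt hi
  refine ⟨(m + 1) * (q - 1) + ν ℓ, fun e he => ?_⟩
  rw [Nat.card_congr (Equiv.subtypeEquivRight fun μ =>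
      (mem_image_shadowIndex_iff hq2 hνℓ hν he).symm), Nat.card_eq_finsetCard,
    card_image_of_injOn (completeAt_injOn (by omega)), shadowIndex, card_sigma,
    sum_congr rfl fun t _ => card_belowBox (by omega) t, filter_gt_eq_Iio,
    Fin.sum_Icc_last_prod_Iio fun i hi => by rw [hν i hi, Nat.sub_zero]]

/-- Shadow count: for a monomial `ν = x_0^{b_0} ⋯ x_ℓ^{b_ℓ}` of degree `d` with `b_ℓ > 0`
and `1 ≤ d ≤ q`, for all sufficiently large `e` the number of projectively reduced monomials
of degree `e` divisible by `ν` equals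
`(q-b_0) ⋯ (q-b_{ℓ-1}) * (1 + (q-b_ℓ) * p_{m-ℓ-1})`. -/
theorem card_shadow (q m d : ℕ) (hq : IsPrimePow q) (hd1 : 1 ≤ d) (hdq : d ≤ q)
    (ν : Fin (m + 1) →₀ ℕ) (ℓ : Fin (m + 1))
    (hνℓ : ν ℓ ≠ 0) (hsupp : ∀ i, ν i ≠ 0 → i ≤ ℓ) (hdeg : (∑ i, ν i) = d) :
    ∃ e₀ : ℕ, ∀ e ≥ e₀,
      Nat.card {μ : Fin (m + 1) →₀ ℕ // (∑ i, μ i) = e ∧ projRed q μ = μ ∧ ν ≤ μ}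
        = (∏ i ∈ Finset.univ.filter (· < ℓ), (q - ν i)) *
            (1 + (q - ν ℓ) * ∑ i ∈ Finset.range (m - (ℓ : ℕ)), q ^ i) :=
  card_shadow_general q m hq ν ℓ hνℓ hsupp
end

section
/- If F is a nonzero polynomial over an algebraic extension k of F_q whose leading monomial (with respect to a monomial order with x_0 ≻ ... ≻ x_m) is projectively reduced, then the projective reduction F̄ of F is nonzero and has the same leading monomial as F. -/
open MvPolynomial Finset

/-!
Projective reduction lowers the exponents of the variables below the last variable `x_ℓ` of a
monomial and moves the difference onto `x_ℓ`. As `x_ℓ` is the smallest variable involved, this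
never increases a monomial: `μ̄ ⪯ μ`. Hence every monomial of `F̄` is `⪯ lm F`, and `lm F` arises
only as the reduction of `lm F` itself (if `μ̄ = lm F` then `lm F ⪯ μ ⪯ lm F`). So the
coefficient of `lm F` in `F̄` is the leading coefficient of `F`.
-/

lemma redExp_le (q a : ℕ) : redExp q a ≤ a := by
  unfold redExp
  split_ifs
  · rfl
  · have := Nat.mod_le (a - 1) (q - 1)
    omega

namespace MonomialOrder

variable {σ : Type*} (m : MonomialOrder σ)

section Pushforward

variable {R : Type*} [CommSemiring R] {φ : (σ →₀ ℕ) → (σ →₀ ℕ)}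

theorem degree_sum_monomial_le (hφ : ∀ μ, φ μ ≼[m] μ) (f : MvPolynomial σ R) :
    m.degree (∑ μ ∈ f.support, monomial (φ μ) (coeff μ f)) ≼[m] m.degree f := by
  refine m.degree_sum_le.trans (Finset.sup_le fun μ hμ => ?_)
  exact (m.degree_monomial_le _).trans ((hφ μ).trans (m.le_degree hμ))

theorem coeff_degree_sum_monomial (hφ : ∀ μ, φ μ ≼[m] μ) {f : MvPolynomial σ R}
    (hfix : φ (m.degree f) = m.degree f) :
    coeff (m.degree f) (∑ μ ∈ f.support, monomial (φ μ) (coeff μ f)) = m.leadingCoeff f := by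
  classical
  have hφ_eq : ∀ μ ∈ f.support, φ μ = m.degree f ↔ μ = m.degree f := by
    refine fun μ hμ => ⟨fun h => m.toSyn.injective (le_antisymm (m.le_degree hμ) ?_), ?_⟩
    · exact h ▸ hφ μ
    · rintro rfl; exact hfix
  simp_rw [coeff_sum, coeff_monomial]
  rw [Finset.sum_congr rfl fun μ hμ => if_congr (hφ_eq μ hμ) rfl rfl, Finset.sum_ite_eq']
  split_ifs with h
  · rfl
  · rw [leadingCoeff, ← notMem_support_iff.mp h]

theorem degree_sum_monomial (hφ : ∀ μ, φ μ ≼[m] μ) {f : MvPolynomial σ R} (hf : f ≠ 0)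
    (hfix : φ (m.degree f) = m.degree f) :
    m.degree (∑ μ ∈ f.support, monomial (φ μ) (coeff μ f)) = m.degree f := by
  refine m.toSyn.injective (le_antisymm (m.degree_sum_monomial_le hφ f) (m.le_degree ?_))
  rw [mem_support_iff, m.coeff_degree_sum_monomial hφ hfix]
  exact m.leadingCoeff_ne_zero_iff.mpr hf

end Pushforward

section VariableOrder

variable [LinearOrder σ]

theorem single_le_single_of_le
    (hvar : ∀ i j : σ, i < j → m.toSyn (Finsupp.single j 1) < m.toSyn (Finsupp.single i 1))
    {i j : σ} (hij : i ≤ j) (n : ℕ) :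
    Finsupp.single j n ≼[m] Finsupp.single i n := by
  rcases hij.eq_or_lt with rfl | hlt
  · rfl
  · rw [← mul_one n, ← smul_eq_mul, ← Finsupp.smul_single, ← Finsupp.smul_single, map_nsmul,
      map_nsmul]
    exact nsmul_le_nsmul_right (hvar i j hlt).le n

theorem le_of_add_sum_single_eq
    (hvar : ∀ i j : σ, i < j → m.toSyn (Finsupp.single j 1) < m.toSyn (Finsupp.single i 1))
    {μ ν : σ →₀ ℕ} {ℓ : σ} {s : Finset σ} (hs : ∀ j ∈ s, j ≤ ℓ)
    (d : σ → ℕ) (h : ν + ∑ j ∈ s, Finsupp.single j (d j) = μ + Finsupp.single ℓ (∑ j ∈ s, d j)) :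
    ν ≼[m] μ := by
  rw [Finsupp.single_finsetSum] at h
  have h' := congrArg m.toSyn h
  simp only [map_add, map_sum] at h'
  refine le_of_add_le_add_right (a := ∑ j ∈ s, m.toSyn (Finsupp.single j (d j))) ?_
  rw [h']
  gcongr with j hj
  exact m.single_le_single_of_le hvar (hs j hj) (d j)

end VariableOrder

end MonomialOrder

open scoped MonomialOrder

theorem projRed_add_sum_single_eq (q : ℕ) {m : ℕ} {μ : Fin (m + 1) →₀ ℕ} (h : μ.support.Nonempty) :
    projRed q μ + ∑ j ∈ univ.filter (· < μ.support.max' h),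
        Finsupp.single j (μ j - redExp q (μ j)) =
      μ + Finsupp.single (μ.support.max' h)
        (∑ j ∈ univ.filter (· < μ.support.max' h), (μ j - redExp q (μ j))) := by
  obtain ⟨ℓ, hℓ⟩ : ∃ ℓ, μ.support.max' h = ℓ := ⟨_, rfl⟩
  have hμ : ∀ i, ℓ < i → μ i = 0 := fun i hi =>
    Finsupp.notMem_support_iff.mp fun hmem => (hℓ ▸ μ.support.le_max' i hmem).not_gt hi
  ext i
  simp only [projRed, dif_pos h, hℓ, Finsupp.add_apply, Finsupp.coe_finsetSum, Finset.sum_apply,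
    Finsupp.single_apply, Finsupp.coe_equivFunOnFinite_symm]
  rcases lt_trichotomy i ℓ with hi | rfl | hi
  · simp [hi, hi.ne', redExp_le]
  · simp
  · simp [hi.not_gt, hi.ne', hi.ne, hμ i hi]

theorem projRed_le {m : ℕ} (mo : MonomialOrder (Fin (m + 1)))
    (hvar : ∀ i j : Fin (m + 1), i < j →
      mo.toSyn (Finsupp.single j 1) < mo.toSyn (Finsupp.single i 1))
    (q : ℕ) (μ : Fin (m + 1) →₀ ℕ) : projRed q μ ≼[mo] μ := by
  by_cases h : μ.support.Nonempty
  · exact mo.le_of_add_sum_single_eq hvar (fun j hj => (Finset.mem_filter.mp hj).2.le) _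
      (projRed_add_sum_single_eq q h)
  · simp [projRed, h]

theorem lmExp_eq_degree {σ : Type} (mo : MonomialOrder σ) {R : Type} [CommSemiring R]
    (f : MvPolynomial σ R) : lmExp mo f = mo.degree f :=
  rfl

theorem polyRed_lmExp_general (q m : ℕ)
    (k : Type) [Field k]
    (mo : MonomialOrder (Fin (m + 1)))
    (hvar : ∀ i j : Fin (m + 1), i < j →
      mo.toSyn (Finsupp.single j 1) < mo.toSyn (Finsupp.single i 1))
    (F : MvPolynomial (Fin (m + 1)) k) (hF : F ≠ 0)
    (hlm : projRed q (lmExp mo F) = lmExp mo F) :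
    polyRed q F ≠ 0 ∧ lmExp mo (polyRed q F) = lmExp mo F := by
  have hred : ∀ μ, projRed q μ ≼[mo] μ := projRed_le mo hvar q
  rw [lmExp_eq_degree] at hlm
  have hcoeff : coeff (mo.degree F) (polyRed q F) = mo.leadingCoeff F :=
    mo.coeff_degree_sum_monomial hred hlm
  refine ⟨fun h0 => mo.leadingCoeff_ne_zero_iff.mpr hF ?_, mo.degree_sum_monomial hred hF hlm⟩
  rw [← hcoeff, h0, coeff_zero]

/-- If the leading monomial of a nonzero polynomial `F` over an algebraic extension `k` of
`F_q` is projectively reduced, then the projective reduction of `F` is nonzero and has the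
same leading monomial as `F`. -/
theorem polyRed_lmExp (q m : ℕ)
    (Fq : Type) [Field Fq] [Fintype Fq] (hq : Fintype.card Fq = q)
    (k : Type) [Field k] [Algebra Fq k] [Algebra.IsAlgebraic Fq k]
    (mo : MonomialOrder (Fin (m + 1)))
    (hvar : ∀ i j : Fin (m + 1), i < j →
      mo.toSyn (Finsupp.single j 1) < mo.toSyn (Finsupp.single i 1))
    (F : MvPolynomial (Fin (m + 1)) k) (hF : F ≠ 0)
    (hlm : projRed q (lmExp mo F) = lmExp mo F) :
    polyRed q F ≠ 0 ∧ lmExp mo (polyRed q F) = lmExp mo F :=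
  polyRed_lmExp_general q m k mo hvar F hF hlm
end
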